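/- arXiv:math/0606283 — 9 statements merged into one kernel-verified Lean document; each statement's English description precedes it below -/
import Mathlib

section
/- Theorem (Baragar; Button; Schmutz — uniqueness of Markoff numbers that are prime powers or twice prime powers). Suppose (x, y, z) and (x', y', z) are Markoff triples with x ≤ y ≤ z and x' ≤ y' ≤ z, and suppose z = p^n or z = 2·p^n for some prime p and some integer n ≥ 1. Then x = x' and y = y'. -/
lemma noSolAux (k : ℤ) (hk : 4 ≤ k) :
    ∀ s : ℕ, ∀ a b c : ℤ, 0 < a → 0 < b → 0 < c →
      a ≤ b → b ≤ c → (a + b + c).toNat = s →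
      a ^ 2 + b ^ 2 + c ^ 2 ≠ k * (a * b * c) := by
  intro s
  induction s using Nat.strong_induction_on with
  | _ s ih =>
  intro a b c ha hb hc hab hbc hs heq
  have hdc : (k * a * b - c) * c = a ^ 2 + b ^ 2 := by linear_combination -heq
  have hd : 0 < k * a * b - c := by
    by_contra h
    push_neg at h
    nlinarith [mul_nonneg (neg_nonneg.mpr h) hc.le, mul_pos ha ha, mul_pos hb hb]
  have heq2 : a ^ 2 + b ^ 2 + (k * a * b - c) ^ 2 = k * (a * b * (k * a * b - c)) := by
    linear_combination heq
  rcases lt_or_ge (k * a * b - c) c with hlt | hge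
  · rcases le_total (k * a * b - c) a with h1 | h1
    · exact ih ((k * a * b - c) + a + b).toNat (by omega) (k * a * b - c) a b hd ha hb h1 hab
        rfl (by linear_combination heq2)
    · rcases le_total (k * a * b - c) b with h2 | h2
      · exact ih (a + (k * a * b - c) + b).toNat (by omega) a (k * a * b - c) b ha hd hb h1 h2
          rfl (by linear_combination heq2)
      · exact ih (a + b + (k * a * b - c)).toNat (by omega) a b (k * a * b - c) ha hb hd hab h2
          rfl (by linear_combination heq2)
  · have h1 : c ^ 2 ≤ a ^ 2 + b ^ 2 := by nlinarith [mul_le_mul_of_nonneg_right hge hc.le]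
    have hka : k * a ≤ 4 := by
      have h2 : k * a * (b * c) ≤ 4 * (b * c) := by
        nlinarith [mul_le_mul_of_nonneg_left hbc hb.le, mul_le_mul hab hab ha.le hb.le]
      have hbc0 : 0 < b * c := mul_pos hb hc
      exact le_of_mul_le_mul_right (by linarith) hbc0
    have hk4 : k = 4 := by nlinarith
    have ha1 : a = 1 := by nlinarith
    subst hk4 ha1
    have key : (c - 2 * b) ^ 2 = 3 * b ^ 2 - 1 := by linear_combination heq
    have h3 : ∀ u v : ZMod 3, u ^ 2 ≠ 3 * v ^ 2 - 1 := by decide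
    exact h3 (c - 2 * b) b (by exact_mod_cast congrArg (fun t : ℤ => (t : ZMod 3)) key)


lemma noSol (k : ℤ) (hk : 4 ≤ k) (a b c : ℤ) (ha : 0 < a) (hb : 0 < b) (hc : 0 < c)
    (heq : a ^ 2 + b ^ 2 + c ^ 2 = k * (a * b * c)) : False := by
  rcases le_total a b with h1 | h1 <;> rcases le_total b c with h2 | h2 <;>
    rcases le_total a c with h3 | h3
  all_goals first
    | exact noSolAux k hk _ a b c ha hb hc (by omega) (by omega) rfl (by linear_combination heq)
    | exact noSolAux k hk _ a c b ha hc hb (by omega) (by omega) rfl (by linear_combination heq)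
    | exact noSolAux k hk _ c a b hc ha hb (by omega) (by omega) rfl (by linear_combination heq)
    | exact noSolAux k hk _ b a c hb ha hc (by omega) (by omega) rfl (by linear_combination heq)
    | exact noSolAux k hk _ b c a hb hc ha (by omega) (by omega) rfl (by linear_combination heq)
    | exact noSolAux k hk _ c b a hc hb ha (by omega) (by omega) rfl (by linear_combination heq)

lemma markoff_coprime {x y z : ℤ} (hx : 0 < x) (hy : 0 < y) (hz : 0 < z)
    (hM : x ^ 2 + y ^ 2 + z ^ 2 = 3 * x * y * z) : IsCoprime x y := by
  rw [Int.isCoprime_iff_gcd_eq_one]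
  by_contra hg
  obtain ⟨q, hq, hqx, hqy⟩ : ∃ q : ℕ, q.Prime ∧ (q : ℤ) ∣ x ∧ (q : ℤ) ∣ y := by
    have hg0 : Int.gcd x y ≠ 0 := by
      rw [Ne, Int.gcd_eq_zero_iff]
      rintro ⟨h, -⟩; omega
    refine ⟨(Int.gcd x y).minFac, Nat.minFac_prime (by omega), ?_, ?_⟩
    · exact (Int.natCast_dvd_natCast.mpr (Nat.minFac_dvd _)).trans (Int.gcd_dvd_left _ _)
    · exact (Int.natCast_dvd_natCast.mpr (Nat.minFac_dvd _)).trans (Int.gcd_dvd_right _ _)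
  have hqz : (q : ℤ) ∣ z := by
    have h1 : (q : ℤ) ∣ z ^ 2 := by
      have hzz : z ^ 2 = 3 * x * y * z - x ^ 2 - y ^ 2 := by linarith
      rw [hzz]
      exact dvd_sub (dvd_sub (((hqx.mul_left 3).mul_right y).mul_right z)
        (dvd_pow hqx two_ne_zero)) (dvd_pow hqy two_ne_zero)
    exact (Nat.prime_iff_prime_int.mp hq).dvd_of_dvd_pow h1
  obtain ⟨a, rfl⟩ := hqx
  obtain ⟨b, rfl⟩ := hqy
  obtain ⟨c, rfl⟩ := hqz
  have hq0 : (0 : ℤ) < q := by exact_mod_cast hq.pos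
  have ha : 0 < a := by nlinarith
  have hb : 0 < b := by nlinarith
  have hc : 0 < c := by nlinarith
  have hcancel : (q : ℤ) ^ 2 * (a ^ 2 + b ^ 2 + c ^ 2) = (q : ℤ) ^ 2 * ((3 * q) * (a * b * c)) := by
    linear_combination hM
  have heq : a ^ 2 + b ^ 2 + c ^ 2 = (3 * (q : ℤ)) * (a * b * c) :=
    mul_left_cancel₀ (pow_ne_zero _ (by positivity)) hcancel
  have h2q : (2 : ℤ) ≤ (q : ℤ) := by exact_mod_cast hq.two_le
  exact noSol (3 * q) (by linarith) a b c ha hb hc heq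


lemma coprime_of_prime_not_dvd {p : ℕ} (hp : p.Prime) {m : ℤ} (h : ¬ (p : ℤ) ∣ m) :
    IsCoprime ((p : ℤ)) m := by
  rw [Int.isCoprime_iff_gcd_eq_one]
  by_contra hg
  have h1 : Int.gcd (p : ℤ) m ∣ p := by
    have := Int.gcd_dvd_left (a := (p : ℤ)) (b := m)
    exact_mod_cast this
  rcases (Nat.Prime.eq_one_or_self_of_dvd hp _ h1) with h2 | h2
  · exact hg h2
  · exact h (by rw [← h2]; exact Int.gcd_dvd_right _ _)

lemma markoff_lt {x y z : ℤ} (hx : 0 < x) (hy : 0 < y) (hz : 0 < z)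
    (hxy : x ≤ y) (hyz : y ≤ z) (hz3 : 3 ≤ z)
    (hM : x ^ 2 + y ^ 2 + z ^ 2 = 3 * x * y * z) : y < z := by
  rcases lt_or_eq_of_le hyz with h | h
  · exact h
  · exfalso
    subst h
    have cop : IsCoprime x y := markoff_coprime hx hy hy hM
    have hdvd : y ∣ x ^ 2 := ⟨y * (3 * x - 2), by linear_combination hM⟩
    have hu : IsUnit y := (cop.pow_left).isUnit_of_dvd' hdvd dvd_rfl
    rw [Int.isUnit_iff] at hu
    omega

lemma markoff_3ab_le {x y z : ℤ} (hx : 0 < x) (hy : 0 < y) (hz : 0 < z)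
    (hxy : x ≤ y) (hylt : y < z)
    (hM : x ^ 2 + y ^ 2 + z ^ 2 = 3 * x * y * z) : 3 * x * y ≤ z + y := by
  have h1 : (3 * x * y - z) * z = x ^ 2 + y ^ 2 := by linear_combination -hM
  have h3 : (y - (3 * x * y - z)) * (y - z) = x ^ 2 + 2 * y ^ 2 - 3 * x * y ^ 2 := by
    linear_combination h1
  have h4 : x ^ 2 + 2 * y ^ 2 - 3 * x * y ^ 2 ≤ 0 := by
    nlinarith [mul_nonneg (by linarith : (0:ℤ) ≤ x - 1) (sq_nonneg y),
      mul_le_mul hxy hxy hx.le hy.le]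
  by_contra h
  push_neg at h
  nlinarith [mul_pos (show (0:ℤ) < 3 * x * y - z - y by linarith)
    (show (0:ℤ) < z - y by linarith)]

lemma bound_min {z q m M : ℤ} (hz : 3 ≤ z) (hm : 0 < m) (hM : 0 < M)
    (hprod : 9 * (m * M) ≤ (2 * z - 1) ^ 2) (hzq : z ^ 2 ≤ 4 * q) (ht : q + m ≤ M) :
    m = 1 := by
  have h1 : 9 * (m * M) < 16 * M := by nlinarith
  have hm2 : m ≤ 1 := by
    by_contra h
    push_neg at h
    nlinarith [mul_le_mul_of_nonneg_right (show (2:ℤ) ≤ m by omega) hM.le]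
  omega


set_option maxHeartbeats 2000000 in
/-- Uniqueness of Markoff numbers which are prime powers or twice prime powers
(Baragar; Button; Schmutz). A Markoff triple is a triple of positive integers
satisfying x² + y² + z² = 3xyz. -/
theorem markoff_unique_of_prime_pow_or_two_mul_prime_pow
    (x y z x' y' : ℤ)
    (hx : 0 < x) (hy : 0 < y) (hz : 0 < z) (hx' : 0 < x') (hy' : 0 < y')
    (hM : x ^ 2 + y ^ 2 + z ^ 2 = 3 * x * y * z)
    (hM' : x' ^ 2 + y' ^ 2 + z ^ 2 = 3 * x' * y' * z)
    (hxy : x ≤ y) (hyz : y ≤ z) (hxy' : x' ≤ y') (hyz' : y' ≤ z)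
    (hpp : ∃ (p n : ℕ), p.Prime ∧ 1 ≤ n ∧ (z = (p : ℤ) ^ n ∨ z = 2 * (p : ℤ) ^ n)) :
    x = x' ∧ y = y' := by
  obtain ⟨p, n, hp, hn, hc⟩ := hpp
  rcases lt_or_ge z 3 with hz3 | hz3
  · -- small cases z = 1, 2
    interval_cases z
    · constructor <;> omega
    · have hM2 : x * x + y * y + 2 * 2 = 3 * (x * y) * 2 := by linear_combination hM
      have hM2' : x' * x' + y' * y' + 2 * 2 = 3 * (x' * y') * 2 := by linear_combination hM'
      have hx2 : x ≤ 2 := le_trans hxy hyz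
      have hy2 : y ≤ 2 := hyz
      have hx2' : x' ≤ 2 := le_trans hxy' hyz'
      have hy2' : y' ≤ 2 := hyz'
      have h1 : x = 1 ∧ y = 1 := by
        interval_cases x <;> interval_cases y <;> omega
      have h2 : x' = 1 ∧ y' = 1 := by
        interval_cases x' <;> interval_cases y' <;> omega
      exact ⟨by omega, by omega⟩
  · -- main case
    have h11 : ¬ (x = 1 ∧ y = 1) := by
      rintro ⟨h1, h2⟩
      rw [h1, h2] at hM
      nlinarith [mul_pos (show (0:ℤ) < z - 1 by linarith) (show (0:ℤ) < z - 2 by linarith)]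
    have h11' : ¬ (x' = 1 ∧ y' = 1) := by
      rintro ⟨h1, h2⟩
      rw [h1, h2] at hM'
      nlinarith [mul_pos (show (0:ℤ) < z - 1 by linarith) (show (0:ℤ) < z - 2 by linarith)]
    have copxy : IsCoprime x y := markoff_coprime hx hy hz hM
    have copyz : IsCoprime y z := markoff_coprime hy hz hx (by linear_combination hM)
    have copxz : IsCoprime x z := markoff_coprime hx hz hy (by linear_combination hM)
    have copxy' : IsCoprime x' y' := markoff_coprime hx' hy' hz hM'
    have copyz' : IsCoprime y' z := markoff_coprime hy' hz hx' (by linear_combination hM')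
    have copxz' : IsCoprime x' z := markoff_coprime hx' hz hy' (by linear_combination hM')
    have hylt : y < z := markoff_lt hx hy hz hxy hyz hz3 hM
    have hylt' : y' < z := markoff_lt hx' hy' hz hxy' hyz' hz3 hM'
    have hb1 : 3 * x * y ≤ z + y := markoff_3ab_le hx hy hz hxy hylt hM
    have hb2 : 3 * x' * y' ≤ z + y' := markoff_3ab_le hx' hy' hz hxy' hylt' hM'
    have hpz : (p : ℤ) ∣ z := by
      rcases hc with h | h <;> rw [h]
      · exact dvd_pow_self _ (by omega)
      · exact (dvd_pow_self _ (by omega : n ≠ 0)).mul_left 2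
    -- p is odd
    have hp2 : p ≠ 2 := by
      rintro rfl
      have h4 : (4 : ℤ) ∣ z := by
        rcases hc with h | h
        · have hn2 : 2 ≤ n := by
            by_contra hcon
            push_neg at hcon
            interval_cases n
            · push_cast at h; omega
          rw [h]
          calc ((4:ℤ)) = ((2:ℕ):ℤ) ^ 2 := by norm_num
          _ ∣ ((2:ℕ):ℤ) ^ n := pow_dvd_pow _ hn2
        · rw [h]
          have : ((2:ℕ):ℤ) ^ 1 ∣ ((2:ℕ):ℤ) ^ n := pow_dvd_pow _ hn
          calc (4:ℤ) = 2 * ((2:ℕ):ℤ) ^ 1 := by norm_num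
          _ ∣ 2 * ((2:ℕ):ℤ) ^ n := mul_dvd_mul_left 2 this
      have hzdvd : z ∣ x ^ 2 + y ^ 2 := ⟨3 * x * y - z, by linear_combination hM⟩
      have h4' : (4 : ℤ) ∣ x ^ 2 + y ^ 2 := h4.trans hzdvd
      have h2x : ¬ (2 : ℤ) ∣ x := by
        intro hdd
        have hu := copxz.isUnit_of_dvd' hdd ((by norm_num : (2:ℤ) ∣ 4).trans h4)
        rw [Int.isUnit_iff] at hu
        omega
      have h2y : ¬ (2 : ℤ) ∣ y := by
        intro hdd
        have hu := copyz.isUnit_of_dvd' hdd ((by norm_num : (2:ℤ) ∣ 4).trans h4)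
        rw [Int.isUnit_iff] at hu
        omega
      obtain ⟨k, hk⟩ : ∃ k, x = 2 * k + 1 := ⟨(x - 1) / 2, by omega⟩
      obtain ⟨l, hl⟩ : ∃ l, y = 2 * l + 1 := ⟨(y - 1) / 2, by omega⟩
      obtain ⟨K, hK⟩ : ∃ K, x ^ 2 + y ^ 2 = 4 * K + 2 :=
        ⟨k * k + k + l * l + l, by rw [hk, hl]; ring⟩
      obtain ⟨m, hm⟩ := h4'
      omega
    have hoddp : ¬ ((p : ℤ) ∣ 2) := by
      intro h
      have h2 : p ∣ 2 := by exact_mod_cast h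
      exact hp2 ((Nat.prime_dvd_prime_iff_eq hp Nat.prime_two).mp h2)
    have hpZ : Prime ((p : ℤ)) := Nat.prime_iff_prime_int.mp hp
    have hq0 : (0 : ℤ) < (p : ℤ) ^ (2 * n) := pow_pos (by exact_mod_cast hp.pos) _
    have he : (((p : ℤ)) ^ n) ^ 2 = (p : ℤ) ^ (2 * n) := by
      rw [← pow_mul, Nat.mul_comm]
    have hqz2 : (p : ℤ) ^ (2 * n) ∣ z ^ 2 := by
      rcases hc with h | h <;> rw [h]
      · exact dvd_of_eq he.symm
      · exact ⟨4, by linear_combination (4 : ℤ) * he⟩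
    have hq4 : z ^ 2 ≤ 4 * (p : ℤ) ^ (2 * n) := by
      rcases hc with h | h <;> rw [h]
      · nlinarith [he, hq0]
      · nlinarith [he]
    have hpx : ¬ (p : ℤ) ∣ x := by
      intro h
      have hu := copxz.isUnit_of_dvd' h hpz
      rw [Int.isUnit_iff] at hu
      have := hp.two_le
      omega
    have hpy : ¬ (p : ℤ) ∣ y := by
      intro h
      have hu := copyz.isUnit_of_dvd' h hpz
      rw [Int.isUnit_iff] at hu
      have := hp.two_le
      omega
    have hpx' : ¬ (p : ℤ) ∣ x' := by
      intro h
      have hu := copxz'.isUnit_of_dvd' h hpz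
      rw [Int.isUnit_iff] at hu
      have := hp.two_le
      omega
    have hpy' : ¬ (p : ℤ) ∣ y' := by
      intro h
      have hu := copyz'.isUnit_of_dvd' h hpz
      rw [Int.isUnit_iff] at hu
      have := hp.two_le
      omega
    have hXY : (x * y' - x' * y) * (x * y' + x' * y - 3 * z * y * y')
        = z ^ 2 * (y ^ 2 - y' ^ 2) := by
      linear_combination y' ^ 2 * hM - y ^ 2 * hM'
    have hqXY : (p : ℤ) ^ (2 * n) ∣ (x * y' - x' * y) * (x * y' + x' * y - 3 * z * y * y') := by
      rw [hXY]; exact hqz2.mul_right _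
    have hprod : 9 * ((x * y') * (x' * y)) ≤ (2 * z - 1) ^ 2 := by
      have hmm := mul_le_mul (show 3 * x * y ≤ 2 * z - 1 by linarith)
        (show 3 * x' * y' ≤ 2 * z - 1 by linarith) (by positivity) (by linarith)
      nlinarith [hmm]
    have hprodE : 9 * ((y * y') * (x * x')) ≤ (2 * z - 1) ^ 2 := by
      have hmm := mul_le_mul (show 3 * x * y ≤ 2 * z - 1 by linarith)
        (show 3 * x' * y' ≤ 2 * z - 1 by linarith) (by positivity) (by linarith)
      nlinarith [hmm]
    by_cases hdx : (p : ℤ) ∣ (x * y' - x' * y)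
    · -- then p does not divide Y, so q ∣ X, and X = 0
      have hdy : ¬ (p : ℤ) ∣ (x * y' + x' * y - 3 * z * y * y') := by
        intro hY
        have h2 : (p : ℤ) ∣ 2 * (x * y') := by
          have hrw : 2 * (x * y') = (x * y' - x' * y) + (x * y' + x' * y - 3 * z * y * y')
              + 3 * y * y' * z := by ring
          rw [hrw]
          exact dvd_add (dvd_add hdx hY) (hpz.mul_left _)
        rcases hpZ.dvd_mul.mp h2 with h | h
        · exact hoddp h
        · rcases hpZ.dvd_mul.mp h with h | h
          · exact hpx h
          · exact hpy' h
      have hqX : (p : ℤ) ^ (2 * n) ∣ x * y' - x' * y :=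
        (((coprime_of_prime_not_dvd hp hdy)).pow_left).dvd_of_dvd_mul_right hqXY
      have hX0 : x * y' - x' * y = 0 := by
        by_contra h0
        have habs : (p : ℤ) ^ (2 * n) ≤ |x * y' - x' * y| :=
          Int.le_of_dvd (abs_pos.mpr h0) ((dvd_abs _ _).mpr hqX)
        rcases (Ne.lt_or_gt h0) with hneg | hpos
        · -- X < 0 : min is x*y'
          have habs2 : (p : ℤ) ^ (2 * n) ≤ x' * y - x * y' := by
            rw [abs_of_neg hneg] at habs; linarith
          have hm1 : x * y' = 1 := by
            refine bound_min (m := x * y') (M := x' * y) hz3 (by positivity) (by positivity)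
              ?_ hq4 (by linarith)
            linarith [hprod]
          rcases Int.mul_eq_one_iff_eq_one_or_neg_one.mp hm1 with ⟨hx1, hy'1⟩ | ⟨hx1, hy'1⟩
          · exact absurd ⟨by omega, hy'1⟩ h11'
          · omega
        · -- X > 0 : min is x'*y
          have habs2 : (p : ℤ) ^ (2 * n) ≤ x * y' - x' * y := by
            rw [abs_of_pos hpos] at habs; linarith
          have hm1 : x' * y = 1 := by
            refine bound_min (m := x' * y) (M := x * y') hz3 (by positivity) (by positivity)
              ?_ hq4 (by linarith)
            linarith [hprod]
          rcases Int.mul_eq_one_iff_eq_one_or_neg_one.mp hm1 with ⟨hx'1, hy1⟩ | ⟨hx'1, hy1⟩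
          · exact absurd ⟨by omega, hy1⟩ h11
          · omega
      -- X = 0 gives equality
      have heqc : x' * y = x * y' := by linarith
      have hd1 : x ∣ x' := copxy.dvd_of_dvd_mul_right ⟨y', heqc.symm ▸ (by ring : x * y' = x * y')⟩
      have hd2 : x' ∣ x := copxy'.dvd_of_dvd_mul_right ⟨y, by linarith⟩
      have hxx : x = x' := Int.dvd_antisymm hx.le hx'.le hd1 hd2
      have hyy : y = y' := by
        have h2 : x * y = x * y' := by
          calc x * y = x' * y := by rw [hxx]
          _ = x * y' := heqc
        exact mul_left_cancel₀ (ne_of_gt hx) h2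
      exact ⟨hxx, hyy⟩
    · -- q ∣ Y, hence q ∣ E
      have hqY : (p : ℤ) ^ (2 * n) ∣ (x * y' + x' * y - 3 * z * y * y') :=
        (((coprime_of_prime_not_dvd hp hdx)).pow_left).dvd_of_dvd_mul_left hqXY
      have hid : y * (x * x' - y * y') = x * (x * y' + x' * y - 3 * z * y * y') + y' * z ^ 2 := by
        linear_combination (-y') * hM
      have hqyE : (p : ℤ) ^ (2 * n) ∣ y * (x * x' - y * y') := by
        rw [hid]
        exact dvd_add (hqY.mul_left x) (hqz2.mul_left y')
      have hqE : (p : ℤ) ^ (2 * n) ∣ x * x' - y * y' :=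
        (((coprime_of_prime_not_dvd hp hpy)).pow_left).dvd_of_dvd_mul_left hqyE
      rcases eq_or_ne (x * x' - y * y') 0 with hE0 | hE0
      · -- xx' = yy'
        have h1 : x * x' = y * y' := by linarith
        have hd1 : y ∣ x' := copxy.symm.dvd_of_dvd_mul_right ⟨y', by linarith [h1]⟩
        have hd2 : x' ∣ y := copxy'.dvd_of_dvd_mul_right ⟨x, by linarith [h1]⟩
        have hxy2 : x' = y := Int.dvd_antisymm hx'.le hy.le hd2 hd1
        have hxyy : x = y' := by
          have h2 : y * y' = y * x := by rw [← h1, hxy2]; ring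
          have := mul_left_cancel₀ (ne_of_gt hy) h2
          omega
        constructor <;> omega
      · have habs : (p : ℤ) ^ (2 * n) ≤ |x * x' - y * y'| :=
          Int.le_of_dvd (abs_pos.mpr hE0) ((dvd_abs _ _).mpr hqE)
        rcases (Ne.lt_or_gt hE0) with hneg | hpos
        · -- E < 0 : xx' = 1, so x = x' = 1
          have habs2 : (p : ℤ) ^ (2 * n) ≤ y * y' - x * x' := by
            rw [abs_of_neg hneg] at habs; linarith
          have hm1 : x * x' = 1 := by
            refine bound_min (m := x * x') (M := y * y') hz3 (by positivity) (by positivity)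
              ?_ hq4 (by linarith)
            linarith [hprodE]
          obtain ⟨hx1, hx'1⟩ : x = 1 ∧ x' = 1 := by
            rcases Int.mul_eq_one_iff_eq_one_or_neg_one.mp hm1 with h | h
            · exact h
            · omega
          subst hx1; subst hx'1
          -- both y, y' satisfy the same quadratic
          have hfac : (y - y') * (y + y' - 3 * z) = 0 := by linear_combination hM - hM'
          rcases mul_eq_zero.mp hfac with h | h
          · exact ⟨rfl, by linarith⟩
          · exfalso
            have hyy : y * y' = 1 + z ^ 2 := by linear_combination y * h - hM
            nlinarith [mul_le_mul (show y ≤ z - 1 by linarith) (show y' ≤ z - 1 by linarith)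
              hy'.le (by linarith)]
        · -- E > 0 : yy' = 1, contradiction
          have habs2 : (p : ℤ) ^ (2 * n) ≤ x * x' - y * y' := by
            rw [abs_of_pos hpos] at habs; linarith
          have hm1 : y * y' = 1 := by
            refine bound_min (m := y * y') (M := x * x') hz3 (by positivity) (by positivity)
              ?_ hq4 (by linarith)
            linarith [hprodE]
          rcases Int.mul_eq_one_iff_eq_one_or_neg_one.mp hm1 with ⟨hy1, hy'1⟩ | ⟨hy1, hy'1⟩
          · exact absurd ⟨by omega, hy1⟩ h11
          · omega
end

section
/- The Reduction Theorem: every Markoff triple can be obtained from (1,1,1) by repeatedly applying permutations of coordinates and the operation (x, y, z) ↦ (x, y, 3xy − z). Formally, let S be the smallest set of triples of positive integers containing (1,1,1) that is closed under permutations of the coordinates and under the map (x, y, z) ↦ (x, y, 3xy − z); then every Markoff triple belongs to S. -/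
lemma markoff_aux
    (S : Set (ℤ × ℤ × ℤ))
    (hone : (1, 1, 1) ∈ S)
    (hperm : ∀ x y z : ℤ, (x, y, z) ∈ S →
      (x, z, y) ∈ S ∧ (y, x, z) ∈ S ∧ (y, z, x) ∈ S ∧ (z, x, y) ∈ S ∧ (z, y, x) ∈ S)
    (hmap : ∀ x y z : ℤ, (x, y, z) ∈ S → 0 < 3 * x * y - z → (x, y, 3 * x * y - z) ∈ S) :
    ∀ n : ℕ, ∀ x y z : ℤ, 0 < x → x ≤ y → y ≤ z →
      x ^ 2 + y ^ 2 + z ^ 2 = 3 * x * y * z → (x + y + z).toNat = n → (x, y, z) ∈ S := by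
  intro n
  induction n using Nat.strong_induction_on with
  | _ n ih =>
    intro x y z hx hxy hyz hM hn
    have hy : 0 < y := lt_of_lt_of_le hx hxy
    have hz : 0 < z := lt_of_lt_of_le hy hyz
    by_cases h1 : z = 1
    · have hx1 : x = 1 := by omega
      have hy1 : y = 1 := by omega
      subst hx1; subst hy1; subst h1; exact hone
    · set w : ℤ := 3 * x * y - z with hwdef
      have hzw : z * w = x ^ 2 + y ^ 2 := by rw [hwdef]; linear_combination -hM
      have hw : 0 < w := by
        rcases lt_or_ge 0 w with h | h
        · exact h
        · exfalso; nlinarith [hzw, mul_nonpos_of_nonneg_of_nonpos hz.le h]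
      have hwz : w < z := by
        by_contra hcon
        push_neg at hcon
        have key : 0 ≤ (z - y) * (w - y) :=
          mul_nonneg (by linarith) (by linarith)
        have h2 : 3 * x * y ^ 2 ≤ x ^ 2 + 2 * y ^ 2 := by
          nlinarith [key, hzw]
        have hx1 : x = 1 := by nlinarith [sq_nonneg (x - y), mul_pos hx hx]
        have hy1 : y = 1 := by nlinarith
        subst hx1; subst hy1
        have hz2 : (z - 1) * (z - 2) = 0 := by linear_combination hM
        rcases mul_eq_zero.mp hz2 with h | h
        · omega
        · have : z = 2 := by omega
          simp only [hwdef] at hcon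
          omega
      have hMw : x ^ 2 + y ^ 2 + w ^ 2 = 3 * x * y * w := by
        rw [hwdef]; linear_combination hM
      have hsum : (x + y + w).toNat < n := by omega
      have hxyw : (x, y, w) ∈ S := by
        rcases le_total y w with h1' | h1'
        · exact ih _ hsum x y w hx hxy h1' hMw rfl
        · rcases le_total x w with h2' | h2'
          · have : (x, w, y) ∈ S := by
              refine ih _ (by omega) x w y hx h2' h1' (by linear_combination hMw) rfl
            exact (hperm x w y this).1
          · have : (w, x, y) ∈ S := by
              refine ih _ (by omega) w x y hw h2' hxy (by linear_combination hMw) rfl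
            exact (hperm w x y this).2.2.1
      have := hmap x y w hxyw (by rw [hwdef]; linarith)
      have hzz : 3 * x * y - w = z := by rw [hwdef]; ring
      rwa [hzz] at this

/-- The Reduction Theorem: every Markoff triple belongs to any set S of triples
of positive integers containing (1,1,1) that is closed under permutations of the
coordinates and under (x, y, z) ↦ (x, y, 3xy − z). -/
theorem markoff_reduction
    (S : Set (ℤ × ℤ × ℤ))
    (hone : (1, 1, 1) ∈ S)
    (hperm : ∀ x y z : ℤ, (x, y, z) ∈ S →
      (x, z, y) ∈ S ∧ (y, x, z) ∈ S ∧ (y, z, x) ∈ S ∧ (z, x, y) ∈ S ∧ (z, y, x) ∈ S)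
    (hmap : ∀ x y z : ℤ, (x, y, z) ∈ S → 0 < 3 * x * y - z → (x, y, 3 * x * y - z) ∈ S)
    (x y z : ℤ) (hx : 0 < x) (hy : 0 < y) (hz : 0 < z)
    (hM : x ^ 2 + y ^ 2 + z ^ 2 = 3 * x * y * z) :
    (x, y, z) ∈ S := by
  have aux := markoff_aux S hone hperm hmap
  rcases le_total x y with hxy | hxy
  · rcases le_total y z with hyz | hyz
    · exact aux _ x y z hx hxy hyz hM rfl
    · rcases le_total x z with hxz | hxz
      · -- x ≤ z ≤ y
        have h := aux _ x z y hx hxz hyz (by linear_combination hM) rfl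
        exact (hperm x z y h).1
      · -- z ≤ x ≤ y
        have h := aux _ z x y hz hxz hxy (by linear_combination hM) rfl
        exact (hperm z x y h).2.2.1
  · rcases le_total x z with hxz | hxz
    · -- y ≤ x ≤ z
      have h := aux _ y x z hy hxy hxz (by linear_combination hM) rfl
      exact (hperm y x z h).2.1
    · rcases le_total y z with hyz | hyz
      · -- y ≤ z ≤ x
        have h := aux _ y z x hy hyz hxz (by linear_combination hM) rfl
        exact (hperm y z x h).2.2.2.1
      · -- z ≤ y ≤ x
        have h := aux _ z y x hz hyz hxy (by linear_combination hM) rfl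
        exact (hperm z y x h).2.2.2.2
end

section
/- If (x, y, z) is a Markoff triple with x < y < z, then 3xy − z < y; that is, replacing the maximal element z of a non-singular ordered Markoff triple by the other root of the Markoff equation in z produces a number strictly smaller than y. -/
/-- For a Markoff triple with x < y < z, the other root 3xy − z of the Markoff
equation in z is strictly smaller than y. -/
theorem markoff_reduction_step_lt
    (x y z : ℤ) (hx : 0 < x) (hy : 0 < y) (hz : 0 < z)
    (hM : x ^ 2 + y ^ 2 + z ^ 2 = 3 * x * y * z)
    (hxy : x < y) (hyz : y < z) :
    3 * x * y - z < y := by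
  have key : (y - (3 * x * y - z)) * (y - z) = x ^ 2 + 2 * y ^ 2 - 3 * x * y ^ 2 := by
    nlinarith [hM]
  nlinarith [mul_pos (sub_pos.mpr hxy) (sub_pos.mpr hxy), sq_nonneg (y - x),
    mul_pos hy (sub_pos.mpr hyz), mul_lt_mul_of_pos_right hxy (mul_pos hy hy)]
end

section
/- If (x, y, z) is a Markoff triple with x ≤ y ≤ z and 2z ≤ 3xy, then (x, y, z) = (1, 1, 1). -/
/-- If (x, y, z) is a Markoff triple with x ≤ y ≤ z and 2z ≤ 3xy,
then (x, y, z) = (1, 1, 1). -/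
theorem markoff_minimal
    (x y z : ℤ) (hx : 0 < x) (hy : 0 < y) (hz : 0 < z)
    (hM : x ^ 2 + y ^ 2 + z ^ 2 = 3 * x * y * z)
    (hxy : x ≤ y) (hyz : y ≤ z) (h : 2 * z ≤ 3 * x * y) :
    x = 1 ∧ y = 1 ∧ z = 1 := by
  have key : (y - z) * (y - (3 * x * y - z)) = x ^ 2 + 2 * y ^ 2 - 3 * x * y ^ 2 := by
    linear_combination -hM
  have hneg : x ^ 2 + 2 * y ^ 2 - 3 * x * y ^ 2 ≤ 0 := by nlinarith
  have hprod : 0 ≤ (y - z) * (y - (3 * x * y - z)) := by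
    have := mul_nonneg (sub_nonneg.mpr hyz) (show (0:ℤ) ≤ (3 * x * y - z) - y by linarith)
    nlinarith [this]
  have h0 : (y - z) * (y - (3 * x * y - z)) = 0 := le_antisymm (by linarith) hprod
  have hyz2 : y = z := by
    rcases mul_eq_zero.mp h0 with h1 | h2
    · linarith
    · linarith
  subst hyz2
  have hx1 : x = 1 := by nlinarith [mul_le_mul_of_nonneg_left hxy (le_of_lt hx)]
  subst hx1
  have : y = 1 := by nlinarith
  exact ⟨rfl, this, this⟩
end

section
/- Every odd prime factor of a Markoff number is congruent to 1 modulo 4: if m is a Markoff number and p is an odd prime dividing m, then p ≡ 1 (mod 4). -/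
/-- Descent lemma: any common divisor of a sorted positive Markoff triple divides 1. -/
lemma markoff_sorted_coprime : ∀ n : ℕ, ∀ x y z d : ℤ,
    x.toNat + y.toNat + z.toNat ≤ n → 0 < x → 0 < y → 0 < z → x ≤ y → y ≤ z →
    x ^ 2 + y ^ 2 + z ^ 2 = 3 * x * y * z → d ∣ x → d ∣ y → d ∣ z → d ∣ 1 := by
  intro n
  induction n using Nat.strong_induction_on with
  | _ n ih =>
  intro x y z d hsum hx hy hz hxy hyz heq hdx hdy hdz
  rcases eq_or_lt_of_le hyz with rfl | hlt
  · -- y = z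
    have h1 : x ^ 2 = y ^ 2 * (3 * x - 2) := by linear_combination heq
    have h2 : y ^ 2 ∣ x ^ 2 := ⟨3 * x - 2, h1⟩
    have h3 : y ^ 2 ≤ x ^ 2 := Int.le_of_dvd (by positivity) h2
    have h4 : x = y := by nlinarith
    have h5 : x = 1 := by nlinarith
    rw [h4] at h5
    rw [h5] at hdy
    exact hdy
  · -- y < z, Vieta descent
    set w : ℤ := 3 * x * y - z with hw
    have hzw : z * w = x ^ 2 + y ^ 2 := by rw [hw]; linear_combination -heq
    have hw0 : 0 < w := by nlinarith [sq_nonneg x, sq_nonneg y]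
    have key : (z - y) * (w - y) ≤ 0 := by
      have e : (z - y) * (w - y) = x ^ 2 + 2 * y ^ 2 - 3 * x * y ^ 2 := by
        rw [hw]; linear_combination -heq
      rw [e]; nlinarith
    have hwy : w ≤ y := by nlinarith
    have heq' : x ^ 2 + w ^ 2 + y ^ 2 = 3 * x * w * y := by
      rw [hw]; linear_combination heq
    have hdw : d ∣ w := by
      rw [hw]
      exact dvd_sub ((hdx.mul_left 3).mul_right y) hdz
    have hmeas : x.toNat + w.toNat + y.toNat < n := by
      have h1 : w.toNat ≤ y.toNat := Int.toNat_le_toNat hwy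
      have h2 : y.toNat < z.toNat := (Int.toNat_lt_toNat hz).mpr hlt
      omega
    rcases le_total x w with hxw | hxw
    · exact ih _ hmeas x w y d le_rfl hx hw0 hy hxw hwy heq' hdx hdw hdy
    · have heq'' : w ^ 2 + x ^ 2 + y ^ 2 = 3 * w * x * y := by linear_combination heq'
      exact ih _ hmeas w x y d (by omega) hw0 hx hy hxw hxy heq'' hdw hdx hdy

/-- Coprimality without sortedness. -/
lemma markoff_coprime_s9 (x y z d : ℤ) (hx : 0 < x) (hy : 0 < y) (hz : 0 < z)
    (heq : x ^ 2 + y ^ 2 + z ^ 2 = 3 * x * y * z)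
    (hdx : d ∣ x) (hdy : d ∣ y) (hdz : d ∣ z) : d ∣ 1 := by
  rcases le_total x y with h1 | h1 <;> rcases le_total y z with h2 | h2 <;>
    rcases le_total x z with h3 | h3
  · exact markoff_sorted_coprime _ x y z d le_rfl hx hy hz h1 h2 heq hdx hdy hdz
  · exact markoff_sorted_coprime _ x y z d le_rfl hx hy hz h1 h2 heq hdx hdy hdz
  · exact markoff_sorted_coprime _ x z y d le_rfl hx hz hy h3 h2 (by linear_combination heq) hdx hdz hdy
  · exact markoff_sorted_coprime _ z x y d le_rfl hz hx hy h3 h1 (by linear_combination heq) hdz hdx hdy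
  · exact markoff_sorted_coprime _ y x z d le_rfl hy hx hz h1 h3 (by linear_combination heq) hdy hdx hdz
  · exact markoff_sorted_coprime _ y z x d le_rfl hy hz hx h2 h3 (by linear_combination heq) hdy hdz hdx
  · exact markoff_sorted_coprime _ z y x d le_rfl hz hy hx h2 h1 (by linear_combination heq) hdz hdy hdx
  · exact markoff_sorted_coprime _ z y x d le_rfl hz hy hx h2 h1 (by linear_combination heq) hdz hdy hdx

lemma markoff_helper (x y z : ℤ) (hx : 0 < x) (hy : 0 < y) (hz : 0 < z)
    (heq : x ^ 2 + y ^ 2 + z ^ 2 = 3 * x * y * z)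
    (p : ℕ) (hp : p.Prime) (hodd : p ≠ 2) (hdvd : (p : ℤ) ∣ z) : p % 4 = 1 := by
  haveI : Fact p.Prime := ⟨hp⟩
  have hpZ : Prime (p : ℤ) := Nat.prime_iff_prime_int.mp hp
  have hpx : ¬ (p : ℤ) ∣ x := by
    intro hx'
    have hy2 : (p : ℤ) ∣ y ^ 2 := by
      have : y ^ 2 = 3 * x * y * z - x ^ 2 - z ^ 2 := by linear_combination heq
      rw [this]
      exact dvd_sub (dvd_sub (((hx'.mul_left 3).mul_right y).mul_right z)
        (hx'.pow (by norm_num))) (hdvd.pow (by norm_num))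
    have hy' : (p : ℤ) ∣ y := hpZ.dvd_of_dvd_pow hy2
    have h1 : (p : ℤ) ∣ 1 := markoff_coprime_s9 x y z _ hx hy hz heq hx' hy' hdvd
    exact hpZ.not_unit (isUnit_of_dvd_one h1)
  have hx0 : (x : ZMod p) ≠ 0 := by
    rw [Ne, ZMod.intCast_zmod_eq_zero_iff_dvd]
    exact hpx
  have hz0 : (z : ZMod p) = 0 := (ZMod.intCast_zmod_eq_zero_iff_dvd _ _).2 hdvd
  have hcast : (x : ZMod p) ^ 2 + (y : ZMod p) ^ 2 + (z : ZMod p) ^ 2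
      = 3 * (x : ZMod p) * (y : ZMod p) * (z : ZMod p) := by
    have := congrArg (fun t : ℤ => (t : ZMod p)) heq
    push_cast at this
    exact this
  rw [hz0] at hcast
  have hsum : (x : ZMod p) ^ 2 + (y : ZMod p) ^ 2 = 0 := by
    linear_combination hcast
  have hsq : IsSquare (-1 : ZMod p) := by
    refine ⟨(y : ZMod p) * (x : ZMod p)⁻¹, ?_⟩
    field_simp
    linear_combination -hsum
  rw [ZMod.exists_sq_eq_neg_one_iff] at hsq
  have h2 : p % 2 = 1 := Nat.odd_iff.mp (hp.odd_of_ne_two hodd)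
  omega

/-- Every odd prime factor of a Markoff number is congruent to 1 modulo 4. -/
theorem markoff_odd_prime_factor_mod_four
    (m : ℤ) (hm : 0 < m)
    (h : ∃ x y z : ℤ, 0 < x ∧ 0 < y ∧ 0 < z ∧
      x ^ 2 + y ^ 2 + z ^ 2 = 3 * x * y * z ∧ (m = x ∨ m = y ∨ m = z))
    (p : ℕ) (hp : p.Prime) (hodd : p ≠ 2) (hdvd : (p : ℤ) ∣ m) :
    p % 4 = 1 := by
  obtain ⟨x, y, z, hx, hy, hz, heq, hm'⟩ := h
  rcases hm' with rfl | rfl | rfl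
  · exact markoff_helper y z m hy hz hx (by linear_combination heq) p hp hodd hdvd
  · exact markoff_helper x z m hx hz hy (by linear_combination heq) p hp hodd hdvd
  · exact markoff_helper x y m hx hy hz heq p hp hodd hdvd
end

section
/- Every odd Markoff number is congruent to 1 modulo 4: if m is an odd Markoff number, then m ≡ 1 (mod 4). -/
/-- residues mod 8 allowed for Markoff numbers -/
def MarkP (x : ℤ) : Prop :=
  (x : ZMod 8) = 1 ∨ (x : ZMod 8) = 2 ∨ (x : ZMod 8) = 5 ∨ (x : ZMod 8) = 6

lemma zmod8_step : ∀ a b c : ZMod 8, a^2 + b^2 + c^2 = 3*a*b*c →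
    (a = 1 ∨ a = 2 ∨ a = 5 ∨ a = 6) →
    (b = 1 ∨ b = 2 ∨ b = 5 ∨ b = 6) →
    (c = 1 ∨ c = 2 ∨ c = 5 ∨ c = 6) →
    (3*a*b - c = 1 ∨ 3*a*b - c = 2 ∨ 3*a*b - c = 5 ∨ 3*a*b - c = 6) := by
  intro a b c h ha hb hc
  rcases ha with rfl|rfl|rfl|rfl <;> rcases hb with rfl|rfl|rfl|rfl <;>
    rcases hc with rfl|rfl|rfl|rfl <;> revert h <;> decide

/-- the key descent lemma for sorted triples -/
lemma markoff_descent : ∀ n : ℕ, ∀ x y z : ℤ, 0 < x → 0 < y → 0 < z →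
    x ≤ y → y ≤ z → x + y + z ≤ n →
    x ^ 2 + y ^ 2 + z ^ 2 = 3 * x * y * z →
    MarkP x ∧ MarkP y ∧ MarkP z := by
  intro n
  induction n with
  | zero => intro x y z hx hy hz _ _ hs _; omega
  | succ n ih =>
    intro x y z hx hy hz hxy hyz hs heq
    by_cases hz1 : z = 1
    · have hx1 : x = 1 := by omega
      have hy1 : y = 1 := by omega
      subst hx1; subst hy1; subst hz1
      refine ⟨Or.inl ?_, Or.inl ?_, Or.inl ?_⟩ <;> norm_num
    · -- z ≥ 2, Vieta descent
      have hz2 : 2 ≤ z := by omega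
      set w : ℤ := 3 * x * y - z with hw
      have hprod : z * w = x ^ 2 + y ^ 2 := by rw [hw]; ring_nf; linarith
      have hwpos : 0 < w := by
        by_contra hc
        push_neg at hc
        nlinarith [sq_nonneg x, sq_nonneg y]
      have hwlt : w < z := by
        by_contra hc
        push_neg at hc
        -- z ≤ w means z^2 ≤ z*w = x^2+y^2
        have h1 : z ^ 2 ≤ x ^ 2 + y ^ 2 := by nlinarith
        -- then 3xyz = x^2+y^2+z^2 ≤ 2(x^2+y^2) ≤ 4y^2, so 3xz ≤ 4y ≤ 4z, x = 1
        have hx1 : x = 1 := by nlinarith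
        subst hx1
        -- 3yz = 1 + y^2 + z^2 and z^2 ≤ 1 + y^2, y ≤ z
        nlinarith
      have heq' : x ^ 2 + y ^ 2 + w ^ 2 = 3 * x * y * w := by
        rw [hw]; ring_nf; linarith
      have hsum : x + y + w ≤ n := by omega
      -- sort (x, y, w) and apply induction hypothesis
      have key : MarkP x ∧ MarkP y ∧ MarkP w := by
        rcases le_total w x with h1 | h1
        · have := ih w x y hwpos hx hy h1 hxy (by omega) (by linarith [heq'])
          · exact ⟨this.2.1, this.2.2, this.1⟩
        · rcases le_total w y with h2 | h2
          · have := ih x w y hx hwpos hy h1 h2 (by omega) (by linarith [heq'])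
            exact ⟨this.1, this.2.2, this.2.1⟩
          · exact ih x y w hx hy hwpos hxy h2 (by omega) (by linarith [heq'])
      obtain ⟨hPx, hPy, hPw⟩ := key
      refine ⟨hPx, hPy, ?_⟩
      -- z = 3xy - w; use the ZMod 8 fact
      have hcast : (z : ZMod 8) = 3 * (x : ZMod 8) * (y : ZMod 8) - (w : ZMod 8) := by
        have : z = 3 * x * y - w := by omega
        rw [this]; push_cast; ring
      have heqc : (x : ZMod 8)^2 + (y : ZMod 8)^2 + (w : ZMod 8)^2
          = 3 * (x : ZMod 8) * (y : ZMod 8) * (w : ZMod 8) := by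
        have := congrArg (Int.cast : ℤ → ZMod 8) heq'
        push_cast at this
        linear_combination this
      have := zmod8_step (x : ZMod 8) (y : ZMod 8) (w : ZMod 8) heqc hPx hPy hPw
      unfold MarkP
      rw [hcast]
      exact this

/-- Every odd Markoff number is congruent to 1 modulo 4. -/
theorem markoff_odd_mod_four
    (m : ℤ) (hm : 0 < m)
    (h : ∃ x y z : ℤ, 0 < x ∧ 0 < y ∧ 0 < z ∧
      x ^ 2 + y ^ 2 + z ^ 2 = 3 * x * y * z ∧ (m = x ∨ m = y ∨ m = z))
    (hodd : Odd m) :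
    m % 4 = 1 := by
  obtain ⟨x, y, z, hx, hy, hz, heq, hmem⟩ := h
  have hP : MarkP m := by
    -- sort the triple and apply the descent lemma
    have key : MarkP x ∧ MarkP y ∧ MarkP z := by
      rcases le_total x y with h1 | h1 <;> rcases le_total y z with h2 | h2 <;>
        rcases le_total x z with h3 | h3
      · exact markoff_descent (x + y + z).toNat x y z hx hy hz h1 h2 (by omega) heq
      · exact markoff_descent (x + y + z).toNat x y z hx hy hz h1 h2 (by omega) heq
      · have := markoff_descent (x + y + z).toNat x z y hx hz hy h3 h2 (by omega)
          (by linarith [heq])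
        exact ⟨this.1, this.2.2, this.2.1⟩
      · have := markoff_descent (x + y + z).toNat z x y hz hx hy (by omega) h1 (by omega)
          (by linarith [heq])
        exact ⟨this.2.1, this.2.2, this.1⟩
      · have := markoff_descent (x + y + z).toNat y x z hy hx hz h1 h3 (by omega)
          (by linarith [heq])
        exact ⟨this.2.1, this.1, this.2.2⟩
      · have := markoff_descent (x + y + z).toNat y z x hy hz hx h2 (by omega) (by omega)
          (by linarith [heq])
        exact ⟨this.2.2, this.1, this.2.1⟩
      · have := markoff_descent (x + y + z).toNat z y x hz hy hx h2 h1 (by omega)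
          (by linarith [heq])
        exact ⟨this.2.2, this.2.1, this.1⟩
      · have := markoff_descent (x + y + z).toNat z y x hz hy hx h2 h1 (by omega)
          (by linarith [heq])
        exact ⟨this.2.2, this.2.1, this.1⟩
    rcases hmem with rfl | rfl | rfl
    · exact key.1
    · exact key.2.1
    · exact key.2.2
  -- convert MarkP m and Odd m to m % 4 = 1
  have hmod : m % 8 = 1 ∨ m % 8 = 2 ∨ m % 8 = 5 ∨ m % 8 = 6 := by
    have conv : ∀ k : ℤ, (m : ZMod 8) = (k : ZMod 8) → m % 8 = k % 8 := by
      intro k hk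
      have := (ZMod.intCast_eq_intCast_iff m k 8).mp hk
      exact this
    rcases hP with h' | h' | h' | h'
    · left; have := conv 1 (by exact_mod_cast h'); omega
    · right; left; have := conv 2 (by exact_mod_cast h'); omega
    · right; right; left; have := conv 5 (by exact_mod_cast h'); omega
    · right; right; right; have := conv 6 (by exact_mod_cast h'); omega
  have hodd2 : m % 2 = 1 := Int.odd_iff.mp hodd
  omega
end

section
/- Every even Markoff number is congruent to 2 modulo 8: if m is an even Markoff number, then m ≡ 2 (mod 8). -/
/-- Vieta jumping: no positive solutions of `x²+y²+z² = k·xyz` for `k ≥ 5`. -/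
theorem hurwitz_aux : ∀ n : ℕ, ∀ x y z k : ℤ, (x+y+z).toNat ≤ n → 5 ≤ k →
    0 < x → 0 < y → 0 < z → x^2 + y^2 + z^2 ≠ k * (x*y*z) := by
  intro n
  induction n with
  | zero => intro x y z k h hk hx hy hz _; omega
  | succ n ih =>
    -- core argument for ordered triples
    have core : ∀ x y z k : ℤ, z ≤ y → y ≤ x → (x+y+z).toNat ≤ n+1 → 5 ≤ k →
        0 < x → 0 < y → 0 < z → x^2 + y^2 + z^2 ≠ k * (x*y*z) := by
      intro x y z k hzy hyx hsum hk hx hy hz heq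
      have hxx' : x * (k*y*z - x) = y^2 + z^2 := by linear_combination -heq
      have hpos : (0:ℤ) < y^2 + z^2 := by positivity
      have hx' : 0 < k*y*z - x := by nlinarith
      rcases lt_or_ge (k*y*z - x) x with hlt | hle
      · exact ih (k*y*z - x) y z k (by omega) hk hx' hy hz
          (by linear_combination heq)
      · have hxsq : x^2 ≤ y^2 + z^2 := by nlinarith
        nlinarith [mul_pos hy hz, mul_pos hx hy, mul_pos hx hz,
          mul_le_mul_of_nonneg_left hyx (le_of_lt hy),
          mul_le_mul_of_nonneg_left hzy (le_of_lt hz)]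
    intro x y z k hsum hk hx hy hz heq
    rcases le_total x y with h1 | h1 <;> rcases le_total y z with h2 | h2 <;>
      rcases le_total x z with h3 | h3
    · exact core z y x k h1 h2 (by omega) hk hz hy hx (by linear_combination heq)
    · exact core z y x k h1 h2 (by omega) hk hz hy hx (by linear_combination heq)
    · exact core y z x k h3 h2 (by omega) hk hy hz hx (by linear_combination heq)
    · exact core y x z k h3 h1 (by omega) hk hy hx hz (by linear_combination heq)
    · exact core z x y k h1 h3 (by omega) hk hz hx hy (by linear_combination heq)
    · exact core x z y k h2 h3 (by omega) hk hx hz hy (by linear_combination heq)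
    · exact core z x y k h1 h3 (by omega) hk hz hx hy (by linear_combination heq)
    · exact core x y z k h2 h1 (by omega) hk hx hy hz (by linear_combination heq)

theorem hurwitz (x y z k : ℤ) (hk : 5 ≤ k) (hx : 0 < x) (hy : 0 < y) (hz : 0 < z) :
    x^2 + y^2 + z^2 ≠ k * (x*y*z) :=
  hurwitz_aux (x+y+z).toNat x y z k le_rfl hk hx hy hz

/-- Odd prime divisors of the even member of a Markoff triple are ≡ 1 mod 4. -/
theorem prime_fac (x y z : ℤ) (hx : 0 < x) (hy : 0 < y) (hz : 0 < z)
    (heq : x^2 + y^2 + z^2 = 3*x*y*z) (p : ℕ) (hp : p.Prime) (hp2 : p ≠ 2)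
    (hdvd : (p:ℤ) ∣ z) : p % 4 = 1 := by
  haveI : Fact p.Prime := ⟨hp⟩
  have hpint : Prime (p:ℤ) := Nat.prime_iff_prime_int.mp hp
  have hp3 : 3 ≤ (p:ℤ) := by
    have := hp.two_le; omega
  by_cases hpx : (p:ℤ) ∣ x
  · -- then p divides all three; divide out and contradict hurwitz
    exfalso
    have hpy : (p:ℤ) ∣ y := by
      have h2 : (p:ℤ) ∣ y^2 := by
        have : y^2 = 3*x*y*z - x^2 - z^2 := by linear_combination heq
        rw [this]
        exact dvd_sub (dvd_sub (((hpx.mul_left 3).mul_right y).mul_right z)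
          (dvd_pow hpx two_ne_zero)) (dvd_pow hdvd two_ne_zero)
      exact hpint.dvd_of_dvd_pow h2
    obtain ⟨a, ha⟩ := hpx
    obtain ⟨b, hb⟩ := hpy
    obtain ⟨d, hd⟩ := hdvd
    have hpp : (0:ℤ) < p := by omega
    have hapos : 0 < a := by nlinarith
    have hbpos : 0 < b := by nlinarith
    have hdpos : 0 < d := by nlinarith
    have heq2 : a^2 + b^2 + d^2 = (3*p) * (a*b*d) := by
      have hcancel : (p:ℤ)^2 * (a^2 + b^2 + d^2) = (p:ℤ)^2 * ((3*p) * (a*b*d)) := by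
        subst ha hb hd; linear_combination heq
      exact mul_left_cancel₀ (by positivity) hcancel
    exact hurwitz a b d (3*p) (by omega) hapos hbpos hdpos heq2
  · -- -1 is a square mod p
    have hsumdvd : (p:ℤ) ∣ x^2 + y^2 := by
      have : x^2 + y^2 = z * (3*x*y - z) := by linear_combination heq
      rw [this]; exact hdvd.mul_right _
    have hx0 : (x : ZMod p) ≠ 0 := by
      rw [Ne, ZMod.intCast_zmod_eq_zero_iff_dvd]; exact hpx
    have hsum : (x : ZMod p)^2 + (y : ZMod p)^2 = 0 := by
      have := (ZMod.intCast_zmod_eq_zero_iff_dvd (x^2+y^2) p).2 hsumdvd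
      push_cast at this; exact this
    have hsq : IsSquare (-1 : ZMod p) := by
      refine ⟨(y : ZMod p) * (x : ZMod p)⁻¹, ?_⟩
      have hx2 : (x : ZMod p)^2 ≠ 0 := pow_ne_zero _ hx0
      field_simp
      linear_combination -hsum
    have h3 := (ZMod.exists_sq_eq_neg_one_iff (p := p)).1 hsq
    have hodd : p % 2 = 1 := by
      rcases hp.eq_two_or_odd with h | h
      · exact absurd h hp2
      · exact h
    omega

theorem nat_all_primes_one_mod_four : ∀ n : ℕ, 0 < n →
    (∀ p : ℕ, p.Prime → p ∣ n → p % 4 = 1) → n % 4 = 1 := by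
  intro n
  induction n using Nat.strong_induction_on with
  | _ n ih =>
    intro hn hall
    rcases eq_or_ne n 1 with rfl | h1
    · rfl
    · have hpf : n.minFac.Prime := Nat.minFac_prime h1
      have hdvd : n.minFac ∣ n := Nat.minFac_dvd n
      obtain ⟨m, hm⟩ := hdvd
      have hp2 : 2 ≤ n.minFac := hpf.two_le
      have hmpos : 0 < m := by
        rcases Nat.eq_zero_or_pos m with rfl | h
        · omega
        · exact h
      have hmlt : m < n := by
        calc m < 2 * m := by omega
        _ ≤ n.minFac * m := by
          exact Nat.mul_le_mul_right m hp2
        _ = n := hm.symm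
      have hm4 : m % 4 = 1 := by
        refine ih m hmlt hmpos (fun p hp hpd => hall p hp ?_)
        exact hm ▸ hpd.mul_left _
      have hpf4 : n.minFac % 4 = 1 := hall _ hpf (Nat.minFac_dvd n)
      rw [hm, Nat.mul_mod, hpf4, hm4]

lemma odd_sq_mod_eight (x : ℤ) (hx : x % 2 = 1) : x^2 % 8 = 1 := by
  obtain ⟨k, hk⟩ : ∃ k, x = 2*k + 1 := ⟨x / 2, by omega⟩
  have h2 : Even (k * (k+1)) := Int.even_mul_succ_self k
  obtain ⟨j, hj⟩ := h2
  have : x^2 = 8*j + 1 := by subst hk; linear_combination 4*hj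
  omega

/-- Master lemma: the even member of a positive Markoff triple is ≡ 2 mod 8. -/
theorem master (x y z : ℤ) (hx : 0 < x) (hy : 0 < y) (hz : 0 < z)
    (heq : x^2 + y^2 + z^2 = 3*x*y*z) (hze : 2 ∣ z) : z % 8 = 2 := by
  -- x and y are odd
  have hxodd : x % 2 = 1 := by
    by_contra hxe'
    have hxe : 2 ∣ x := by omega
    have hye : 2 ∣ y := by
      have h2 : (2:ℤ) ∣ y^2 := by
        have hh : y^2 = 3*x*y*z - x^2 - z^2 := by linear_combination heq
        rw [hh]
        exact dvd_sub (dvd_sub (((hxe.mul_left 3).mul_right y).mul_right z)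
          (dvd_pow hxe two_ne_zero)) (dvd_pow hze two_ne_zero)
      exact Int.prime_two.dvd_of_dvd_pow h2
    obtain ⟨a, ha⟩ := hxe; obtain ⟨b, hb⟩ := hye; obtain ⟨d, hd⟩ := hze
    have heq2 : a^2 + b^2 + d^2 = 6 * (a*b*d) := by
      subst ha hb hd
      have h4 : (4:ℤ) * (a^2+b^2+d^2) = 4 * (6*(a*b*d)) := by linear_combination heq
      linarith
    exact hurwitz a b d 6 (by omega) (by omega) (by omega) (by omega) heq2
  have hyodd : y % 2 = 1 := by
    by_contra hye'
    have hye : 2 ∣ y := by omega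
    have hxe : 2 ∣ x := by
      have h2 : (2:ℤ) ∣ x^2 := by
        have hh : x^2 = 3*x*y*z - y^2 - z^2 := by linear_combination heq
        rw [hh]
        exact dvd_sub (dvd_sub ((hye.mul_left (3*x)).mul_right z)
          (dvd_pow hye two_ne_zero)) (dvd_pow hze two_ne_zero)
      exact Int.prime_two.dvd_of_dvd_pow h2
    omega
  obtain ⟨w, hw⟩ := hze
  have hwpos : 0 < w := by omega
  -- w is odd
  have hwodd : w % 2 = 1 := by
    by_contra hwe'
    obtain ⟨v, hv⟩ : ∃ v, w = 2*v := ⟨w/2, by omega⟩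
    have key : x^2 + y^2 + 16*(v*v) = 4*(3*(x*y*v)) := by
      subst hw hv; linear_combination heq
    have hx8 := odd_sq_mod_eight x hxodd
    have hy8 := odd_sq_mod_eight y hyodd
    omega
  -- every prime factor of w is ≡ 1 mod 4
  have hw4 : w % 4 = 1 := by
    have hn : w = ((w.toNat : ℤ)) := by omega
    have hnat : w.toNat % 4 = 1 := by
      apply nat_all_primes_one_mod_four _ (by omega)
      intro p hp hpd
      have hpw : (p:ℤ) ∣ w := by
        rw [hn]; exact Int.natCast_dvd_natCast.2 hpd
      have hpz : (p:ℤ) ∣ z := by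
        rw [hw]; exact hpw.mul_left 2
      have hp2 : p ≠ 2 := by
        rintro rfl
        obtain ⟨c, hc⟩ := hpw
        omega
      exact prime_fac x y z hx hy hz heq p hp hp2 hpz
    omega
  omega

/-- Every even Markoff number is congruent to 2 modulo 8. -/
theorem markoff_even_mod_eight
    (m : ℤ) (hm : 0 < m)
    (h : ∃ x y z : ℤ, 0 < x ∧ 0 < y ∧ 0 < z ∧
      x ^ 2 + y ^ 2 + z ^ 2 = 3 * x * y * z ∧ (m = x ∨ m = y ∨ m = z))
    (heven : Even m) :
    m % 8 = 2 := by
  obtain ⟨x, y, z, hx, hy, hz, heq, hcase⟩ := h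
  have hme : 2 ∣ m := heven.two_dvd
  rcases hcase with rfl | rfl | rfl
  · exact master y z m hy hz hm (by linear_combination heq) hme
  · exact master x z m hx hz hm (by linear_combination heq) hme
  · exact master x y m hx hy hm (by linear_combination heq) hme
end

section
/- If (x, y, z) is a Markoff triple and u is an integer such that u·x ≡ y (mod z) or u·x ≡ −y (mod z), then u² + 1 ≡ 0 (mod z). -/
-- Hurwitz: no positive solutions for k ≥ 4, sorted version core step inside strong induction
theorem hurwitz_s13 : ∀ n : ℕ, ∀ k x y z : ℤ, 4 ≤ k → 0 < x → 0 < y → 0 < z →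
    (x + y + z).natAbs = n → x ^ 2 + y ^ 2 + z ^ 2 ≠ k * x * y * z := by
  intro n
  induction n using Nat.strong_induction_on with
  | _ n IH =>
    -- first a sorted core
    have core : ∀ x y z : ℤ, ∀ k : ℤ, 4 ≤ k → 0 < x → 0 < y → 0 < z → x ≤ y → y ≤ z →
        (x + y + z).natAbs = n → x ^ 2 + y ^ 2 + z ^ 2 ≠ k * x * y * z := by
      intro x y z k hk hx hy hz hxy hyz hn heq
      set z' : ℤ := k * x * y - z with hz'def
      have hkey : z * z' = x ^ 2 + y ^ 2 := by rw [hz'def]; linarith [heq]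
      have hz'pos : 0 < z' := by nlinarith
      by_cases hlt : z' < z
      · -- descend
        have heq' : x ^ 2 + y ^ 2 + z' ^ 2 = k * x * y * z' := by
          have : z' ^ 2 = k * x * y * z' - z * z' := by rw [hz'def]; ring
          rw [this, hkey]; ring
        have hm : (x + y + z').natAbs < n := by omega
        -- need sorted for nothing: IH is unsorted statement
        exact IH _ hm k x y z' hk hx hy hz'pos rfl heq'
      · push_neg at hlt
        have h1 : z ^ 2 ≤ x ^ 2 + y ^ 2 := by nlinarith
        have h2 : k * x ≤ 4 := by nlinarith
        have hx1 : x = 1 := by nlinarith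
        have hk4 : k = 4 := by nlinarith
        subst hx1; subst hk4
        -- 1 + y^2 + z^2 = 4*y*z impossible mod 4
        have hc := congrArg (Int.cast : ℤ → ZMod 4) heq
        push_cast at hc
        have : ∀ a b : ZMod 4, ¬ (1 + a ^ 2 + b ^ 2 = 4 * a * b) := by decide
        exact this y z hc
    -- now sort
    intro k x y z hk hx hy hz hn heq
    rcases le_total x y with h1 | h1 <;> rcases le_total y z with h2 | h2 <;>
      rcases le_total x z with h3 | h3
    · exact core x y z k hk hx hy hz h1 h2 hn heq
    · exact core x y z k hk hx hy hz h1 h2 hn heq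
    · exact core x z y k hk hx hz hy h3 h2 (by rw [show x+z+y = x+y+z by ring]; exact hn)
        (by linarith [heq] )
    · exact core z x y k hk hz hx hy h3 h1 (by rw [show z+x+y = x+y+z by ring]; exact hn)
        (by linarith [heq])
    · exact core y x z k hk hy hx hz h1 h3 (by rw [show y+x+z = x+y+z by ring]; exact hn)
        (by linarith [heq])
    · exact core y z x k hk hy hz hx h2 h3 (by rw [show y+z+x = x+y+z by ring]; exact hn)
        (by linarith [heq])
    · exact core z y x k hk hz hy hx h2 h1 (by rw [show z+y+x = x+y+z by ring]; exact hn)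
        (by linarith [heq])
    · exact core z y x k hk hz hy hx h2 h1 (by rw [show z+y+x = x+y+z by ring]; exact hn)
        (by linarith [heq])

/-- If (x, y, z) is a Markoff triple and u·x ≡ ±y (mod z), then u² + 1 ≡ 0 (mod z). -/
theorem markoff_u_sq_add_one
    (x y z u : ℤ) (hx : 0 < x) (hy : 0 < y) (hz : 0 < z)
    (hM : x ^ 2 + y ^ 2 + z ^ 2 = 3 * x * y * z)
    (hu : u * x ≡ y [ZMOD z] ∨ u * x ≡ -y [ZMOD z]) :
    u ^ 2 + 1 ≡ 0 [ZMOD z] := by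
  -- Step 1: gcd x z = 1
  have hcop : IsCoprime x z := by
    rw [Int.isCoprime_iff_gcd_eq_one]
    by_contra hne
    set p := (Int.gcd x z).minFac with hp
    have hpp : p.Prime := Nat.minFac_prime hne
    have hpx : (p : ℤ) ∣ x := dvd_trans (Int.natCast_dvd_natCast.mpr (Nat.minFac_dvd _)) (Int.gcd_dvd_left x z)
    have hpz : (p : ℤ) ∣ z := dvd_trans (Int.natCast_dvd_natCast.mpr (Nat.minFac_dvd _)) (Int.gcd_dvd_right x z)
    have hppI : Prime (p : ℤ) := Nat.prime_iff_prime_int.mp hpp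
    have hpy : (p : ℤ) ∣ y := by
      have : (p : ℤ) ∣ y ^ 2 := by
        have : y ^ 2 = 3 * x * y * z - x ^ 2 - z ^ 2 := by linarith
        rw [this]
        exact dvd_sub (dvd_sub (((dvd_mul_of_dvd_right hpx 3).mul_right y).mul_right z)
          (dvd_pow hpx two_ne_zero)) (dvd_pow hpz two_ne_zero)
      exact hppI.dvd_of_dvd_pow this
    obtain ⟨a, ha⟩ := hpx
    obtain ⟨b, hb⟩ := hpy
    obtain ⟨c, hc⟩ := hpz
    have hp0 : (0 : ℤ) < p := by exact_mod_cast hpp.pos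
    have hap : 0 < a := by nlinarith
    have hbp : 0 < b := by nlinarith
    have hcp : 0 < c := by nlinarith
    have heq2 : a ^ 2 + b ^ 2 + c ^ 2 = (3 * p) * a * b * c := by
      have h := hM
      rw [ha, hb, hc] at h
      have hp2 : (p : ℤ) ^ 2 ≠ 0 := by positivity
      apply mul_left_cancel₀ hp2
      ring_nf
      ring_nf at h
      linarith
    have hk4 : (4 : ℤ) ≤ 3 * p := by
      have : (2 : ℤ) ≤ p := by exact_mod_cast hpp.two_le
      linarith
    exact hurwitz_s13 _ (3 * ↑p) a b c hk4 hap hbp hcp rfl heq2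
  -- Step 2: z ∣ x^2 + y^2
  have hzxy : z ∣ x ^ 2 + y ^ 2 := ⟨3 * x * y - z, by linarith⟩
  -- Step 3: z ∣ x^2 * (u^2+1)
  have hdvd : z ∣ x ^ 2 * (u ^ 2 + 1) := by
    rcases hu with h | h
    · have h1 : z ∣ u * x - y := Int.ModEq.dvd h.symm
      have : x ^ 2 * (u ^ 2 + 1) = (u * x - y) * (u * x + y) + (x ^ 2 + y ^ 2) := by ring
      rw [this]
      exact dvd_add (h1.mul_right _) hzxy
    · have h1 : z ∣ u * x + y := by
        have := Int.ModEq.dvd h.symm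
        have e : u * x + y = u * x - (-y) := by ring
        rw [e]; exact this
      have : x ^ 2 * (u ^ 2 + 1) = (u * x + y) * (u * x - y) + (x ^ 2 + y ^ 2) := by ring
      rw [this]
      exact dvd_add (h1.mul_right _) hzxy
  have hcop2 : IsCoprime z (x ^ 2) := (hcop.symm.pow_right)
  have : z ∣ u ^ 2 + 1 := hcop2.dvd_of_dvd_mul_left hdvd
  exact (Int.modEq_zero_iff_dvd).mpr this
end

section
/- Let X, Y be matrices in SL(2, ℤ) with tr(XYX⁻¹Y⁻¹) = −2, and suppose there are positive integers a, b, c with tr(X) = 3a, tr(Y) = 3b, and tr(XY) = 3c. Then (a, b, c) is a Markoff triple, i.e. a² + b² + c² = 3abc. -/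
open Matrix

/-- If X, Y ∈ SL(2, ℤ) with tr(XYX⁻¹Y⁻¹) = −2 and tr(X) = 3a, tr(Y) = 3b,
tr(XY) = 3c for positive integers a, b, c, then (a, b, c) is a Markoff triple. -/
theorem markoff_triple_of_traces
    (X Y : SpecialLinearGroup (Fin 2) ℤ)
    (h : Matrix.trace ((X * Y * X⁻¹ * Y⁻¹ : SpecialLinearGroup (Fin 2) ℤ) :
      Matrix (Fin 2) (Fin 2) ℤ) = -2)
    (a b c : ℤ) (ha : 0 < a) (hb : 0 < b) (hc : 0 < c)
    (htrX : Matrix.trace ((X : Matrix (Fin 2) (Fin 2) ℤ)) = 3 * a)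
    (htrY : Matrix.trace ((Y : Matrix (Fin 2) (Fin 2) ℤ)) = 3 * b)
    (htrXY : Matrix.trace ((X * Y : SpecialLinearGroup (Fin 2) ℤ) :
      Matrix (Fin 2) (Fin 2) ℤ) = 3 * c) :
    a ^ 2 + b ^ 2 + c ^ 2 = 3 * a * b * c := by
  have hX : Matrix.det (X : Matrix (Fin 2) (Fin 2) ℤ) = 1 := X.2
  have hY : Matrix.det (Y : Matrix (Fin 2) (Fin 2) ℤ) = 1 := Y.2
  rw [Matrix.det_fin_two] at hX hY
  simp only [Matrix.SpecialLinearGroup.coe_mul, Matrix.SpecialLinearGroup.coe_inv,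
    Matrix.adjugate_fin_two, Matrix.trace_fin_two, Matrix.mul_apply,
    Fin.sum_univ_two, Matrix.of_apply, Matrix.cons_val', Matrix.cons_val_zero,
    Matrix.cons_val_one, Matrix.head_cons, Matrix.head_fin_const, Matrix.empty_val',
    Matrix.cons_val_fin_one] at h htrX htrY htrXY
  set x0 := (X : Matrix (Fin 2) (Fin 2) ℤ) 0 0 with hx0
  set x1 := (X : Matrix (Fin 2) (Fin 2) ℤ) 0 1 with hx1
  set x2 := (X : Matrix (Fin 2) (Fin 2) ℤ) 1 0 with hx2
  set x3 := (X : Matrix (Fin 2) (Fin 2) ℤ) 1 1 with hx3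
  set y0 := (Y : Matrix (Fin 2) (Fin 2) ℤ) 0 0 with hy0
  set y1 := (Y : Matrix (Fin 2) (Fin 2) ℤ) 0 1 with hy1
  set y2 := (Y : Matrix (Fin 2) (Fin 2) ℤ) 1 0 with hy2
  set y3 := (Y : Matrix (Fin 2) (Fin 2) ℤ) 1 1 with hy3
  have h9 : 9 * (a ^ 2 + b ^ 2 + c ^ 2) = 9 * (3 * a * b * c) := by
    linear_combination h - (y0 ^ 2 + 2 * y0 * y3 + y3 ^ 2 - 2) * hX
      - (x0 ^ 2 + 2 * x1 * x2 + x3 ^ 2) * hY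
      + (-(x0 + x3 + 3 * a) + (y0 + y3) * (x0 * y0 + x1 * y2 + x2 * y1 + x3 * y3)) * htrX
      + (-(y0 + y3 + 3 * b) + 3 * a * (x0 * y0 + x1 * y2 + x2 * y1 + x3 * y3)) * htrY
      + (-(x0 * y0 + x1 * y2 + x2 * y1 + x3 * y3 + 3 * c) + 9 * a * b) * htrXY
  linarith
end
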